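/- arXiv:1409.6828 — 8 statements merged into one kernel-verified Lean document; each statement's English description precedes it below -/
import Mathlib

section
/- Let G be a simple graph on N vertices and let Q = (q_1, q_2, …, q_l) with l ≥ 1 be a shortest path between its endpoints (a path whose length equals the graph distance between q_1 and q_l). Then the sum of the degrees of the vertices on the path satisfies Σ_{k=1}^{l} |N_{q_k}| ≤ 2l + 3(N − l) < 3N. -/
/-!
Along a shortest walk `p` the distance between the vertices at positions `i ≤ j` is exactly
`j - i`. Hence a vertex of `p` is adjacent to at most its two path neighbours, and any vertex
is adjacent to at most three consecutive vertices of `p` (two neighbours of `w` are at distance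
at most two). Counting the pairs (position on `p`, neighbour) by neighbour gives the bound.
-/

open Finset

namespace Finset

lemma sum_le_mul_card_add_mul_card_compl {ι : Type*} [Fintype ι] (s : Finset ι) (f : ι → ℕ)
    {a b : ℕ} (hs : ∀ i ∈ s, f i ≤ a) (hf : ∀ i, f i ≤ b) :
    ∑ i, f i ≤ a * #s + b * (Fintype.card ι - #s) := by
  classical
  rw [← sum_add_sum_compl s f, ← card_compl]
  gcongr
  · exact (sum_le_sum hs).trans_eq (by rw [sum_const, smul_eq_mul, mul_comm])
  · exact (sum_le_sum fun i _ => hf i).trans_eq (by rw [sum_const, smul_eq_mul, mul_comm])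

end Finset

namespace SimpleGraph.Walk

variable {V : Type*} {G : SimpleGraph V} {u v : V}

lemma dist_getVert_le (p : G.Walk u v) {i j : ℕ} (hij : i ≤ j) :
    G.dist (p.getVert i) (p.getVert j) ≤ j - i := by
  have hend : (p.drop i).getVert (j - i) = p.getVert j := by
    rw [drop_getVert, Nat.add_sub_cancel' hij]
  calc G.dist (p.getVert i) (p.getVert j)
      = G.dist (p.getVert i) ((p.drop i).getVert (j - i)) := by rw [hend]
    _ ≤ ((p.drop i).take (j - i)).length := dist_le _
    _ ≤ j - i := by rw [take_length]; exact min_le_left _ _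

lemma dist_getVert_of_length_eq_dist (p : G.Walk u v) (hp : p.length = G.dist u v)
    {i j : ℕ} (hij : i ≤ j) (hj : j ≤ p.length) :
    G.dist (p.getVert i) (p.getVert j) = j - i := by
  refine le_antisymm (p.dist_getVert_le hij) ?_
  have hu : G.dist u (p.getVert i) ≤ i := by
    simpa using p.dist_getVert_le (Nat.zero_le i)
  have hv : G.dist (p.getVert j) v ≤ p.length - j := by
    simpa using p.dist_getVert_le hj
  have : G.dist u v ≤ G.dist u (p.getVert i) + G.dist (p.getVert i) v :=
    Reachable.dist_triangle_right ⟨p.drop i⟩ u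
  have : G.dist (p.getVert i) v ≤ G.dist (p.getVert i) (p.getVert j) + G.dist (p.getVert j) v :=
    Reachable.dist_triangle_right ⟨p.drop j⟩ _
  omega

lemma eq_add_one_or_eq_sub_one_of_adj_getVert (p : G.Walk u v) (hp : p.length = G.dist u v)
    {i j : ℕ} (hi : i ≤ p.length) (hj : j ≤ p.length)
    (hadj : G.Adj (p.getVert i) (p.getVert j)) :
    j = i + 1 ∨ j = i - 1 := by
  have hd := dist_eq_one_iff_adj.mpr hadj
  rcases le_total i j with hij | hji
  · rw [p.dist_getVert_of_length_eq_dist hp hij hj] at hd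
    omega
  · rw [dist_comm, p.dist_getVert_of_length_eq_dist hp hji hi] at hd
    omega

lemma le_add_two_of_adj_getVert (p : G.Walk u v) (hp : p.length = G.dist u v) {w : V}
    {i j : ℕ} (hij : i ≤ j) (hj : j ≤ p.length)
    (hi : G.Adj w (p.getVert i)) (hj' : G.Adj w (p.getVert j)) : j ≤ i + 2 := by
  have := dist_le (cons hi.symm (cons hj' nil))
  rw [p.dist_getVert_of_length_eq_dist hp hij hj] at this
  simp only [length_cons, length_nil] at this
  omega

variable [DecidableRel G.Adj]

def adjIndices (p : G.Walk u v) (w : V) : Finset ℕ :=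
  {k ∈ range (p.length + 1) | G.Adj w (p.getVert k)}

lemma card_adjIndices_le_three (p : G.Walk u v) (hp : p.length = G.dist u v) (w : V) :
    #(p.adjIndices w) ≤ 3 := by
  rcases (p.adjIndices w).eq_empty_or_nonempty with hempty | hne
  · simp [hempty]
  set m := (p.adjIndices w).min' hne
  have hm := mem_filter.mp ((p.adjIndices w).min'_mem hne)
  have hsub : p.adjIndices w ⊆ Icc m (m + 2) := by
    intro k hk
    have hmk : m ≤ k := (p.adjIndices w).min'_le k hk
    have hk' := mem_filter.mp hk
    rw [mem_range] at hk'
    exact mem_Icc.mpr ⟨hmk, p.le_add_two_of_adj_getVert hp hmk (by omega) hm.2 hk'.2⟩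
  exact (card_le_card hsub).trans_eq (by rw [Nat.card_Icc]; omega)

lemma card_adjIndices_getVert_le_two (p : G.Walk u v) (hp : p.length = G.dist u v)
    {m : ℕ} (hm : m ≤ p.length) : #(p.adjIndices (p.getVert m)) ≤ 2 := by
  have hsub : p.adjIndices (p.getVert m) ⊆ {m + 1, m - 1} := by
    intro k hk
    have hk' := mem_filter.mp hk
    rw [mem_range] at hk'
    simpa using p.eq_add_one_or_eq_sub_one_of_adj_getVert hp hm (by omega) hk'.2
  exact (card_le_card hsub).trans (card_insert_le _ _)

lemma sum_degree_getVert_eq_sum_card_adjIndices [Fintype V] (p : G.Walk u v) :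
    ∑ k ∈ range (p.length + 1), G.degree (p.getVert k) = ∑ w, #(p.adjIndices w) := by
  simp_rw [← card_neighborFinset_eq_degree, neighborFinset_eq_filter, adjIndices,
    adj_comm G _ (p.getVert _)]
  exact sum_card_bipartiteAbove_eq_sum_card_bipartiteBelow _

lemma sum_degree_getVert_le [Fintype V] (p : G.Walk u v) (hp : p.length = G.dist u v) :
    ∑ k ∈ range (p.length + 1), G.degree (p.getVert k)
      ≤ 2 * (p.length + 1) + 3 * (Fintype.card V - (p.length + 1)) := by
  classical
  have hcard : #p.support.toFinset = p.length + 1 := by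
    rw [List.toFinset_card_of_nodup (p.isPath_of_length_eq_dist hp).support_nodup, length_support]
  rw [sum_degree_getVert_eq_sum_card_adjIndices, ← hcard]
  refine sum_le_mul_card_add_mul_card_compl _ _ (fun w hw => ?_) (p.card_adjIndices_le_three hp)
  obtain ⟨m, rfl, hm⟩ := mem_support_iff_exists_getVert.mp (List.mem_toFinset.mp hw)
  exact p.card_adjIndices_getVert_le_two hp hm

end SimpleGraph.Walk

theorem shortestPath_degree_sum_lt_three_mul_general {N : ℕ} (G : SimpleGraph (Fin N))
    [DecidableRel G.Adj] {x y : Fin N} (p : G.Walk x y)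
    (hsh : p.length = G.dist x y) :
    (∑ k ∈ Finset.range (p.length + 1), G.degree (p.getVert k))
        ≤ 2 * (p.length + 1) + 3 * (N - (p.length + 1)) ∧
    2 * (p.length + 1) + 3 * (N - (p.length + 1)) < 3 * N := by
  have hlt : p.length < N := by
    simpa using (p.isPath_of_length_eq_dist hsh).length_lt
  exact ⟨by simpa using p.sum_degree_getVert_le hsh, by omega⟩

/-- for a shortest path `Q = (q_1, …, q_l)` (with `l = p.length + 1 ≥ 1`
vertices) in a simple graph on `N` vertices, the sum of the degrees of the vertices on
the path satisfies `∑_{k=1}^l |N_{q_k}| ≤ 2l + 3(N − l) < 3N`. -/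
theorem shortestPath_degree_sum_lt_three_mul {N : ℕ} (G : SimpleGraph (Fin N))
    [DecidableRel G.Adj] {x y : Fin N} (p : G.Walk x y) (hp : p.IsPath)
    (hsh : p.length = G.dist x y) :
    (∑ k ∈ Finset.range (p.length + 1), G.degree (p.getVert k))
        ≤ 2 * (p.length + 1) + 3 * (N - (p.length + 1)) ∧
    2 * (p.length + 1) + 3 * (N - (p.length + 1)) < 3 * N :=
  shortestPath_degree_sum_lt_three_mul_general G p hsh
end

section
/- (Lemma 2) Let G be a connected simple graph on N ≥ 2 vertices with biased random walk matrix P^B. Fix a vertex y and let h_y : V → ℝ be a hitting-time solution with target y (so h_y equals the expected hitting time H(·,y) of the biased random walk). Then h_y(x) < 3N³ for every vertex x; in particular the hitting time of the biased random walk satisfies H(G) = max_{x,y} H(x,y) < 3N³. -/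
/-!
Let `x₀` maximise `h` and let `p` be a shortest path from `x₀` to `y`. Since `P^B` is symmetric and
stochastic, the hitting equations turn the Dirichlet energy `∑ₓ ∑_z P(x,z) (h x - h z)²` into
`2 ∑ₓ h x ≤ 2 (N - 1) h x₀`, and Cauchy–Schwarz along `p` bounds `h x₀² = (h x₀ - h y)²` by the
resistance `∑_{e ∈ p} 1 / P(e)` of `p` times half this energy. An edge leaving `v` has resistance at
most `N deg v`, and a vertex is adjacent to at most three vertices of a shortest path, so the
degrees along `p` add up to at most `3N`. Hence `h x₀² ≤ 3N² (N - 1) h x₀`.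
-/

/-- The biased random walk transition matrix `P^B` of a graph `G` on `Fin N`:
`P^B i j = (1/N)(1/deg i + 1/deg j)` for edges, `P^B i i = 1 - 1/N - ∑_{k ∈ N_i} 1/(N deg k)`,
and `0` otherwise. -/
noncomputable def PB {N : ℕ} (G : SimpleGraph (Fin N)) [DecidableRel G.Adj]
    (i j : Fin N) : ℝ :=
  if i = j then
    1 - 1 / (N : ℝ) - ∑ k ∈ G.neighborFinset i, 1 / ((N : ℝ) * (G.degree k : ℝ))
  else if G.Adj i j then
    (1 / (N : ℝ)) * (1 / (G.degree i : ℝ) + 1 / (G.degree j : ℝ))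
  else 0

open Finset SimpleGraph

theorem sum_le_card_sub_one_mul {V : Type*} [Fintype V] {f : V → ℝ} {y : V} {M : ℝ}
    (hy : f y = 0) (hf : ∀ x, f x ≤ M) :
    ∑ x, f x ≤ (Fintype.card V - 1) * M := by
  classical
  rw [← sum_erase_add _ _ (mem_univ y), hy, add_zero]
  refine (sum_le_card_nsmul _ _ _ fun x _ => hf x).trans_eq ?_
  rw [card_erase_of_mem (mem_univ y), card_univ, nsmul_eq_mul,
    Nat.cast_sub (Fintype.card_pos_iff.2 ⟨y⟩), Nat.cast_one]

section DirichletForm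

variable {V : Type*} [Fintype V] {P : V → V → ℝ}

theorem sum_sum_mul_sub_sq_eq (hsymm : ∀ x z, P x z = P z x) (hrow : ∀ x, ∑ z, P x z = 1)
    (f : V → ℝ) :
    ∑ x, ∑ z, P x z * (f x - f z) ^ 2 = 2 * ∑ x, f x * (f x - ∑ z, P x z * f z) := by
  have hdiag : ∑ x, ∑ z, P x z * f x ^ 2 = ∑ x, f x ^ 2 := by
    simp only [← sum_mul, hrow, one_mul]
  have hcol : ∀ z, ∑ x, P x z = 1 := fun z => by simpa only [hsymm z] using hrow z
  have hdiag' : ∑ x, ∑ z, P x z * f z ^ 2 = ∑ x, f x ^ 2 := by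
    rw [sum_comm]
    simp only [← sum_mul, hcol, one_mul]
  calc ∑ x, ∑ z, P x z * (f x - f z) ^ 2
      = ∑ x, ∑ z, P x z * f x ^ 2 + ∑ x, ∑ z, P x z * f z ^ 2
          - 2 * ∑ x, f x * ∑ z, P x z * f z := by
        simp only [mul_sum, ← sum_add_distrib, ← sum_sub_distrib]
        exact sum_congr rfl fun x _ => sum_congr rfl fun z _ => by ring
    _ = 2 * ∑ x, f x * (f x - ∑ z, P x z * f z) := by
        rw [hdiag, hdiag']
        simp only [mul_sub, sum_sub_distrib, sq]
        ring

theorem sum_sum_mul_sub_sq_eq_of_hitting (hsymm : ∀ x z, P x z = P z x)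
    (hrow : ∀ x, ∑ z, P x z = 1) {y : V} {h : V → ℝ} (h0 : h y = 0)
    (hrec : ∀ x, x ≠ y → h x = 1 + ∑ z, P x z * h z) :
    ∑ x, ∑ z, P x z * (h x - h z) ^ 2 = 2 * ∑ x, h x := by
  rw [sum_sum_mul_sub_sq_eq hsymm hrow]
  congr 1
  refine sum_congr rfl fun x _ => ?_
  by_cases hx : x = y
  · simp [hx, h0]
  · linear_combination h x * hrec x hx

theorem sum_nonneg_of_hitting (hsymm : ∀ x z, P x z = P z x) (hrow : ∀ x, ∑ z, P x z = 1)
    (hP : ∀ x z, 0 ≤ P x z) {y : V} {h : V → ℝ} (h0 : h y = 0)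
    (hrec : ∀ x, x ≠ y → h x = 1 + ∑ z, P x z * h z) :
    0 ≤ ∑ x, h x := by
  have : 0 ≤ ∑ x, ∑ z, P x z * (h x - h z) ^ 2 :=
    sum_nonneg fun _ _ => sum_nonneg fun _ _ => mul_nonneg (hP _ _) (sq_nonneg _)
  linarith [sum_sum_mul_sub_sq_eq_of_hitting hsymm hrow h0 hrec]

end DirichletForm

namespace SimpleGraph.Walk

variable {V : Type*} {G : SimpleGraph V} {u v : V}

theorem sum_map_darts_sub {A : Type*} [AddCommGroup A] (p : G.Walk u v) (f : V → A) :
    (p.darts.map fun d => f d.fst - f d.snd).sum = f u - f v := by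
  induction p with
  | nil => simp
  | cons _ p ih => simp [ih]

theorem IsTrail.symm_notMem_darts {p : G.Walk u v} (hp : p.IsTrail) {d : G.Dart}
    (hd : d ∈ p.darts) : d.symm ∉ p.darts := fun hd' =>
  d.symm_ne (List.inj_on_of_nodup_map hp.edges_nodup hd' hd d.edge_symm)

theorem IsTrail.two_mul_sum_darts_le [Fintype V] [DecidableEq V] {p : G.Walk u v}
    (hp : p.IsTrail) {F : V → V → ℝ} (hF : ∀ x z, 0 ≤ F x z) (hsymm : ∀ x z, F x z = F z x) :
    2 * ∑ d ∈ p.darts.toFinset, F d.fst d.snd ≤ ∑ x, ∑ z, F x z := by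
  set T := p.darts.toFinset
  set T' := T.map ⟨Dart.symm, Dart.symm_involutive.injective⟩
  have hdisj : Disjoint T T' := by
    rw [Finset.disjoint_left]
    rintro _ hd hd'
    obtain ⟨d, hd'', rfl⟩ := mem_map.1 hd'
    exact hp.symm_notMem_darts (List.mem_toFinset.1 hd'') (List.mem_toFinset.1 hd)
  calc 2 * ∑ d ∈ T, F d.fst d.snd
      = ∑ d ∈ T ∪ T', F d.fst d.snd := by
        rw [sum_union hdisj, sum_map, two_mul]
        exact congrArg _ (sum_congr rfl fun d _ => hsymm _ _)
    _ = ∑ q ∈ (T ∪ T').map ⟨Dart.toProd, Dart.toProd_injective⟩, F q.1 q.2 := by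
        rw [sum_map]
        rfl
    _ ≤ ∑ q : V × V, F q.1 q.2 := sum_le_univ_sum_of_nonneg fun q => hF _ _
    _ = ∑ x, ∑ z, F x z := Fintype.sum_prod_type _

theorem IsTrail.sq_sub_le_sum_inv_mul [Fintype V] [DecidableEq V] {p : G.Walk u v}
    (hp : p.IsTrail) {P : V → V → ℝ} (hsymm : ∀ x z, P x z = P z x) (hP : ∀ x z, 0 ≤ P x z)
    (hadj : ∀ x z, G.Adj x z → 0 < P x z) (f : V → ℝ) :
    (f u - f v) ^ 2 ≤ (∑ d ∈ p.darts.toFinset, (P d.fst d.snd)⁻¹) *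
      ((∑ x, ∑ z, P x z * (f x - f z) ^ 2) / 2) := by
  have hnodup : p.darts.Nodup := hp.edges_nodup.of_map _
  have henergy := hp.two_mul_sum_darts_le (F := fun x z => P x z * (f x - f z) ^ 2)
    (fun x z => mul_nonneg (hP x z) (sq_nonneg _))
    (fun x z => by rw [hsymm, ← neg_sub, neg_sq])
  rw [← p.sum_map_darts_sub f, ← List.sum_toFinset _ hnodup]
  calc (∑ d ∈ p.darts.toFinset, (f d.fst - f d.snd)) ^ 2
      ≤ (∑ d ∈ p.darts.toFinset, (P d.fst d.snd)⁻¹) *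
          ∑ d ∈ p.darts.toFinset, P d.fst d.snd * (f d.fst - f d.snd) ^ 2 :=
        sum_sq_le_sum_mul_sum_of_sq_le_mul _ (fun d _ => inv_nonneg.2 (hP _ _))
          (fun d _ => mul_nonneg (hP _ _) (sq_nonneg _))
          (fun d _ => by rw [inv_mul_cancel_left₀ (hadj _ _ d.adj).ne'])
    _ ≤ _ := mul_le_mul_of_nonneg_left (by linarith)
        (sum_nonneg fun d _ => inv_nonneg.2 (hP _ _))

theorem sub_le_dist_getVert_of_length_eq_dist {p : G.Walk u v} (hp : p.length = G.dist u v)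
    {i j : ℕ} (hj : j ≤ p.length) :
    j - i ≤ G.dist (p.getVert i) (p.getVert j) := by
  have hu : G.dist u (p.getVert i) ≤ i :=
    (dist_le (p.take i)).trans ((p.take_length i).trans_le (min_le_left _ _))
  have hv : G.dist (p.getVert j) v ≤ p.length - j := (dist_le (p.drop j)).trans (p.drop_length j).le
  have h₁ := (p.take i).reachable.dist_triangle_left v
  have h₂ := (p.drop j).reachable.dist_triangle_right (p.getVert i)
  omega

theorem card_filter_adj_support_le_three [DecidableEq V] [DecidableRel G.Adj] {p : G.Walk u v}
    (hp : p.length = G.dist u v) (w : V) :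
    #{x ∈ p.support.toFinset | G.Adj x w} ≤ 3 := by
  set I := {i ∈ range (p.length + 1) | G.Adj (p.getVert i) w}
  have hsub : {x ∈ p.support.toFinset | G.Adj x w} ⊆ I.image p.getVert := by
    intro x hx
    obtain ⟨hx, hxw⟩ := mem_filter.1 hx
    obtain ⟨i, rfl, hi⟩ := mem_support_iff_exists_getVert.1 (List.mem_toFinset.1 hx)
    exact mem_image_of_mem _ (mem_filter.2 ⟨mem_range.2 (by omega), hxw⟩)
  refine (card_le_card hsub).trans (card_image_le.trans ?_)
  rcases I.eq_empty_or_nonempty with hI | hI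
  · simp [hI]
  have hclose : ∀ i ∈ I, ∀ j ∈ I, j ≤ i + 2 := by
    intro i hi j hj
    simp only [I, mem_filter, mem_range] at hi hj
    have h2 : G.dist (p.getVert i) (p.getVert j) ≤ 2 :=
      (Reachable.dist_triangle_left hi.2.reachable _).trans
        (by rw [dist_eq_one_iff_adj.2 hi.2, dist_eq_one_iff_adj.2 hj.2.symm])
    have := sub_le_dist_getVert_of_length_eq_dist hp (i := i) (j := j) (by omega)
    omega
  calc #I ≤ #(Icc (I.min' hI) (I.min' hI + 2)) :=
        card_le_card fun j hj => mem_Icc.2 ⟨I.min'_le j hj, hclose _ (I.min'_mem hI) j hj⟩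
    _ = 3 := by rw [Nat.card_Icc]; omega

theorem sum_degree_support_le [Fintype V] [DecidableEq V] [DecidableRel G.Adj]
    {p : G.Walk u v} (hp : p.length = G.dist u v) :
    ∑ x ∈ p.support.toFinset, G.degree x ≤ 3 * Fintype.card V := by
  calc ∑ x ∈ p.support.toFinset, G.degree x
      = ∑ x ∈ p.support.toFinset, #(univ.bipartiteAbove G.Adj x) := by
        simp [bipartiteAbove, ← card_neighborFinset_eq_degree, neighborFinset_eq_filter]
    _ = ∑ w, #(p.support.toFinset.bipartiteBelow G.Adj w) :=
        sum_card_bipartiteAbove_eq_sum_card_bipartiteBelow _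
    _ ≤ ∑ _w : V, 3 := sum_le_sum fun w _ => card_filter_adj_support_le_three hp w
    _ = 3 * Fintype.card V := by simp [mul_comm]

theorem IsPath.sum_darts_fst_le {M : Type*} [AddCommMonoid M] [PartialOrder M]
    [IsOrderedAddMonoid M] [DecidableEq V] {p : G.Walk u v} (hp : p.IsPath) {g : V → M}
    (hg : ∀ x, 0 ≤ g x) :
    ∑ d ∈ p.darts.toFinset, g d.fst ≤ ∑ x ∈ p.support.toFinset, g x := by
  have hnodup : (p.darts.map (·.fst)).Nodup :=
    p.map_fst_darts ▸ hp.support_nodup.sublist (List.dropLast_sublist _)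
  rw [← sum_image fun d hd d' hd' => List.inj_on_of_nodup_map hnodup
    (List.mem_toFinset.1 hd) (List.mem_toFinset.1 hd')]
  refine sum_le_sum_of_subset_of_nonneg (fun x hx => ?_) fun x _ _ => hg x
  obtain ⟨d, hd, rfl⟩ := mem_image.1 hx
  exact List.mem_toFinset.2 (p.dart_fst_mem_support_of_mem_darts (List.mem_toFinset.1 hd))

end SimpleGraph.Walk

section BiasedWalk

variable {N : ℕ} {G : SimpleGraph (Fin N)} [DecidableRel G.Adj]

theorem PB_comm (i j : Fin N) : PB G i j = PB G j i := by
  by_cases hij : i = j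
  · rw [hij]
  by_cases hadj : G.Adj i j
  · simp only [PB, hij, Ne.symm hij, hadj, hadj.symm, if_false, if_true]
    ring
  · have hadj' : ¬G.Adj j i := fun h => hadj h.symm
    simp [PB, hij, Ne.symm hij, hadj, hadj']

theorem PB_of_adj {i j : Fin N} (h : G.Adj i j) :
    PB G i j = 1 / N * (1 / G.degree i + 1 / G.degree j) := by
  simp [PB, h.ne, h]

theorem PB_pos_of_adj {i j : Fin N} (h : G.Adj i j) : 0 < PB G i j := by
  have := h.degree_pos_left
  have := h.degree_pos_right
  have : 0 < N := i.pos
  rw [PB_of_adj h]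
  positivity

theorem inv_PB_le_of_adj {i j : Fin N} (h : G.Adj i j) :
    (PB G i j)⁻¹ ≤ N * G.degree i := by
  have := h.degree_pos_left
  have := h.degree_pos_right
  have : 0 < N := i.pos
  rw [PB_of_adj h, inv_le_comm₀ (by positivity) (by positivity), mul_inv, ← one_div, ← one_div]
  gcongr
  exact le_add_of_nonneg_right (by positivity)

theorem PB_self_nonneg (i : Fin N) : 0 ≤ PB G i i := by
  have hN : (0 : ℝ) < N := Nat.cast_pos.2 i.pos
  have hdeg : (G.degree i : ℝ) ≤ N - 1 := by
    have := G.degree_lt_card_verts i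
    rw [Fintype.card_fin] at this
    rw [le_sub_iff_add_le]
    exact_mod_cast this
  have hsum : ∑ k ∈ G.neighborFinset i, 1 / ((N : ℝ) * G.degree k) ≤ G.degree i / N := by
    calc ∑ k ∈ G.neighborFinset i, 1 / ((N : ℝ) * G.degree k)
        ≤ ∑ k ∈ G.neighborFinset i, 1 / (N : ℝ) := sum_le_sum fun k hk => by
          have : (1 : ℝ) ≤ G.degree k :=
            Nat.one_le_cast.2 ((mem_neighborFinset _ _ _).1 hk).degree_pos_right
          gcongr
          exact le_mul_of_one_le_right hN.le this
      _ = G.degree i / N := by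
          rw [sum_const, card_neighborFinset_eq_degree, nsmul_eq_mul, mul_one_div]
  rw [PB, if_pos rfl]
  have : (G.degree i : ℝ) / N ≤ 1 - 1 / N := by
    rw [div_le_iff₀ hN, sub_mul, one_div_mul_cancel hN.ne']
    linarith
  linarith

theorem PB_nonneg (i j : Fin N) : 0 ≤ PB G i j := by
  by_cases hij : i = j
  · exact hij ▸ PB_self_nonneg i
  by_cases hadj : G.Adj i j
  · exact (PB_pos_of_adj hadj).le
  · simp [PB, hij, hadj]

theorem sum_PB_eq_one {i : Fin N} (hi : 0 < G.degree i) : ∑ j, PB G i j = 1 := by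
  have hN : (0 : ℝ) < N := Nat.cast_pos.2 i.pos
  have hsplit : ∀ j, PB G i j = (if i = j then PB G i i else 0) +
      if G.Adj i j then 1 / (N : ℝ) * (1 / (G.degree i : ℝ) + 1 / (G.degree j : ℝ)) else 0 := by
    intro j
    by_cases hij : i = j
    · simp [hij]
    · simp [PB, hij]
  rw [sum_congr rfl fun j _ => hsplit j, sum_add_distrib, sum_ite_eq, if_pos (mem_univ _),
    ← sum_filter, ← neighborFinset_eq_filter, PB, if_pos rfl]
  simp only [mul_add, sum_add_distrib, sum_const, card_neighborFinset_eq_degree, nsmul_eq_mul]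
  field_simp
  ring

theorem sum_darts_inv_PB_le {u v : Fin N} {p : G.Walk u v} (hp : p.length = G.dist u v) :
    ∑ d ∈ p.darts.toFinset, (PB G d.fst d.snd)⁻¹ ≤ 3 * (N : ℝ) ^ 2 :=
  calc ∑ d ∈ p.darts.toFinset, (PB G d.fst d.snd)⁻¹
      ≤ ∑ d ∈ p.darts.toFinset, (N : ℝ) * G.degree d.fst :=
        sum_le_sum fun d _ => inv_PB_le_of_adj d.adj
    _ ≤ N * ∑ x ∈ p.support.toFinset, (G.degree x : ℝ) := by
        rw [← mul_sum]
        gcongr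
        exact (p.isPath_of_length_eq_dist hp).sum_darts_fst_le fun x => Nat.cast_nonneg (G.degree x)
    _ ≤ N * (3 * N) := by
        gcongr
        exact_mod_cast (p.sum_degree_support_le hp).trans_eq (by simp)
    _ = 3 * (N : ℝ) ^ 2 := by ring

end BiasedWalk

/-- Lemma 2: for a connected simple graph on `N ≥ 2` vertices, any
hitting-time solution `h` with target `y` (i.e. `h y = 0` and
`h x = 1 + ∑ z, P^B x z * h z` for `x ≠ y`, characterizing the expected hitting time
`H(·,y)` of the biased random walk) satisfies `h x < 3 N³` for every vertex `x`;
hence the hitting time of the biased random walk satisfies `H(G) < 3 N³`. -/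
theorem hitting_time_lt_three_N_cubed {N : ℕ} (hN : 2 ≤ N)
    (G : SimpleGraph (Fin N)) [DecidableRel G.Adj] (hconn : G.Connected)
    (y : Fin N) (h : Fin N → ℝ) (h0 : h y = 0)
    (hrec : ∀ x, x ≠ y → h x = 1 + ∑ z, PB G x z * h z) :
    ∀ x, h x < 3 * (N : ℝ) ^ 3 := by
  have : Nontrivial (Fin N) := Fin.nontrivial_iff_two_le.2 hN
  have hrow : ∀ x, ∑ z, PB G x z = 1 :=
    fun x => sum_PB_eq_one (hconn.preconnected.degree_pos_of_nontrivial x)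
  obtain ⟨x₀, -, hmax⟩ := exists_max_image univ h ⟨y, mem_univ y⟩
  suffices h x₀ < 3 * (N : ℝ) ^ 3 from fun x => (hmax x (mem_univ x)).trans_lt this
  obtain ⟨p, hp⟩ := hconn.exists_walk_length_eq_dist x₀ y
  have hsq : h x₀ ^ 2 ≤ 3 * N ^ 2 * ((N - 1) * h x₀) :=
    calc h x₀ ^ 2
        ≤ (∑ d ∈ p.darts.toFinset, (PB G d.fst d.snd)⁻¹) * ∑ x, h x := by
          simpa [sum_sum_mul_sub_sq_eq_of_hitting PB_comm hrow h0 hrec, h0] using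
            (p.isPath_of_length_eq_dist hp).isTrail.sq_sub_le_sum_inv_mul PB_comm PB_nonneg
              (fun _ _ => PB_pos_of_adj) h
      _ ≤ 3 * N ^ 2 * ((N - 1) * h x₀) :=
          mul_le_mul (sum_darts_inv_PB_le hp)
            (by simpa using sum_le_card_sub_one_mul h0 fun x => hmax x (mem_univ x))
            (sum_nonneg_of_hitting PB_comm hrow PB_nonneg h0 hrec) (by positivity)
  have hM : 0 ≤ h x₀ := h0 ▸ hmax y (mem_univ y)
  rcases hM.eq_or_lt with hM0 | hMpos
  · rw [← hM0]
    positivity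
  · have : h x₀ ≤ 3 * N ^ 2 * (N - 1) := le_of_mul_le_mul_right (by linarith) hMpos
    nlinarith
end

section
/- (Lemma 3) Let G be a connected simple graph on N ≥ 2 vertices with biased random walk matrix P^B, and for each vertex v let h_v : V → ℝ be a hitting-time solution with target v. Then for all vertices x, y, z the cyclic identity holds: h_y(x) + h_z(y) + h_x(z) = h_z(x) + h_y(z) + h_x(y), i.e., H(x,y) + H(y,z) + H(z,x) = H(x,z) + H(z,y) + H(y,x). -/
/-!
For a symmetric matrix `P` with unit row sums on `n` states, the function `f = h_y` satisfies
`(I - P) f = 1 - n e_y`: off `y` this is the defining equation, and at `y` the value is forced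
because `(I - P)` has zero column sums. Pairing `h_y` against `(I - P) h_z` and using the symmetry
of `P` gives the reciprocity `S_y - n h_y(z) = S_z - n h_z(y)` with `S_v = ∑ u, h_v(u)`. Summing it
over the three pairs of a cycle `x, y, z` cancels every `S_v`. The biased walk matrix `P^B` is
symmetric, and its rows sum to one as soon as no vertex is isolated.
-/

open Matrix

def IsHittingTimeSolution {ι : Type*} [Fintype ι] (P : Matrix ι ι ℝ) (y : ι) (f : ι → ℝ) :
    Prop :=
  f y = 0 ∧ ∀ x, x ≠ y → f x = 1 + (P *ᵥ f) x

namespace IsHittingTimeSolution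

variable {ι : Type*} [Fintype ι] [DecidableEq ι] {P : Matrix ι ι ℝ} {y : ι} {f : ι → ℝ}

theorem sub_mulVec_self (hcol : 1 ᵥ* P = 1) (hf : IsHittingTimeSolution P y f) :
    f - P *ᵥ f = 1 - (Fintype.card ι : ℝ) • Pi.single y 1 := by
  set d := f - P *ᵥ f - (1 - (Fintype.card ι : ℝ) • Pi.single y 1)
  have hd_off : ∀ u, u ≠ y → d u = 0 := fun u hu => by
    simp [d, hf.2 u hu, hu]
  have hd_sum : ∑ u, d u = 0 := by
    have hPf : ∑ u, (P *ᵥ f) u = ∑ u, f u := by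
      rw [← one_dotProduct, dotProduct_mulVec, hcol, one_dotProduct]
    simp [d, Finset.sum_sub_distrib, hPf, ← Finset.mul_sum, Finset.sum_pi_single']
  rw [← sub_eq_zero]
  funext u
  by_cases hu : u = y
  · subst hu
    rwa [Finset.sum_eq_single u (fun v _ hv => hd_off v hv) (by simp)] at hd_sum
  · exact hd_off u hu

theorem sum_sub_card_mul_eq (hP : P.IsSymm) (hrow : P *ᵥ 1 = 1) {z : ι} {g : ι → ℝ}
    (hf : IsHittingTimeSolution P y f) (hg : IsHittingTimeSolution P z g) :
    ∑ u, f u - Fintype.card ι * f z = ∑ u, g u - Fintype.card ι * g y := by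
  have hcol : 1 ᵥ* P = 1 := by rw [← mulVec_transpose, hP, hrow]
  calc ∑ u, f u - Fintype.card ι * f z = f ⬝ᵥ (g - P *ᵥ g) := by
        rw [hg.sub_mulVec_self hcol]
        simp [dotProduct_sub, dotProduct_one, dotProduct_single]
    _ = (f - P *ᵥ f) ⬝ᵥ g := by
        rw [dotProduct_sub, sub_dotProduct, dotProduct_mulVec, ← mulVec_transpose, hP]
    _ = ∑ u, g u - Fintype.card ι * g y := by
        rw [hf.sub_mulVec_self hcol]
        simp [sub_dotProduct, one_dotProduct, single_dotProduct, mul_comm]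

theorem cyclic_sum_eq (hP : P.IsSymm) (hrow : P *ᵥ 1 = 1) {h : ι → ι → ℝ}
    (hh : ∀ v, IsHittingTimeSolution P v (h v)) (x y z : ι) :
    h y x + h z y + h x z = h z x + h y z + h x y := by
  have hcard : (Fintype.card ι : ℝ) ≠ 0 := by
    exact_mod_cast (Fintype.card_pos_iff.mpr ⟨x⟩).ne'
  have hxy := sum_sub_card_mul_eq hP hrow (hh y) (hh x)
  have hyz := sum_sub_card_mul_eq hP hrow (hh z) (hh y)
  have hzx := sum_sub_card_mul_eq hP hrow (hh x) (hh z)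
  apply mul_left_cancel₀ hcard
  linarith

end IsHittingTimeSolution

section BiasedWalk

variable {N : ℕ} (G : SimpleGraph (Fin N)) [DecidableRel G.Adj]

theorem isSymm_PB : (of (PB G)).IsSymm := by
  ext i j
  simp only [transpose_apply, of_apply, PB]
  by_cases hij : i = j
  · subst hij; rfl
  · simp only [if_neg hij, if_neg (Ne.symm hij), G.adj_comm j i]
    split_ifs <;> ring

theorem sum_PB {i : Fin N} (hi : G.degree i ≠ 0) : ∑ j, PB G i j = 1 := by
  have hsplit : ∀ j, PB G i j =
      (if i = j then 1 - 1 / (N : ℝ) - ∑ k ∈ G.neighborFinset i, 1 / ((N : ℝ) * G.degree k)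
        else 0) +
      (if G.Adj i j then 1 / ((N : ℝ) * G.degree i) + 1 / ((N : ℝ) * G.degree j) else 0) := by
    intro j
    by_cases hij : i = j
    · subst hij; simp [PB]
    · simp only [PB, if_neg hij, zero_add]
      split_ifs <;> field_simp
  rw [Finset.sum_congr rfl fun j _ => hsplit j, Finset.sum_add_distrib, Finset.sum_ite_eq,
    ← Finset.sum_filter, ← SimpleGraph.neighborFinset_eq_filter, Finset.sum_add_distrib,
    Finset.sum_const, SimpleGraph.card_neighborFinset_eq_degree, if_pos (Finset.mem_univ i),
    nsmul_eq_mul]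
  have hdeg : (G.degree i : ℝ) ≠ 0 := by exact_mod_cast hi
  rw [mul_one_div, div_mul_cancel_right₀ hdeg]
  ring

theorem mulVec_PB_one (hdeg : ∀ i, G.degree i ≠ 0) : of (PB G) *ᵥ 1 = 1 := by
  funext i
  simpa [mulVec, dotProduct] using sum_PB G (hdeg i)

end BiasedWalk

/-- Lemma 3: for a connected simple graph on `N ≥ 2` vertices and a family
`h` of hitting-time solutions of the biased random walk (`h v u` is the expected hitting
time `H(u, v)` from `u` to target `v`), the cyclic identity holds:
`H(x,y) + H(y,z) + H(z,x) = H(x,z) + H(z,y) + H(y,x)`. -/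
theorem hitting_time_cyclic_identity {N : ℕ} (hN : 2 ≤ N)
    (G : SimpleGraph (Fin N)) [DecidableRel G.Adj] (hconn : G.Connected)
    (h : Fin N → Fin N → ℝ) (h0 : ∀ v, h v v = 0)
    (hrec : ∀ v x, x ≠ v → h v x = 1 + ∑ z, PB G x z * h v z)
    (x y z : Fin N) :
    h y x + h z y + h x z = h z x + h y z + h x y := by
  have : Nontrivial (Fin N) := Fin.nontrivial_iff_two_le.mpr hN
  have hdeg : ∀ i, G.degree i ≠ 0 := fun i =>
    (hconn.preconnected.degree_pos_of_nontrivial i).ne'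
  exact IsHittingTimeSolution.cyclic_sum_eq (isSymm_PB G) (mulVec_PB_one G hdeg)
    (fun v => ⟨h0 v, hrec v⟩) x y z
end

section
/- (Existence of a hidden vertex) Let G be a connected simple graph on N ≥ 2 vertices with biased random walk matrix P^B, and for each vertex v let h_v : V → ℝ be a hitting-time solution with target v. Then there exists a vertex t such that h_v(t) ≤ h_t(v) for every vertex v, i.e., a vertex t with H(t,v) ≤ H(v,t) for all v. -/
open Matrix Finset

section HittingTime

variable {ι R : Type*} [Fintype ι] [CommRing R]

lemma sub_mulVec_eq_of_hitting [DecidableEq ι] {P : Matrix ι ι R} (hP : 1 ᵥ* P = 1)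
    {f : ι → R} {y : ι} (hf : ∀ x ≠ y, f x = 1 + (P *ᵥ f) x) :
    f - P *ᵥ f = 1 - (Fintype.card ι : R) • Pi.single y 1 := by
  have hoff : ∀ x ≠ y, (f - P *ᵥ f) x = 1 := fun x hx => by
    rw [Pi.sub_apply, hf x hx, add_sub_cancel_right]
  have hsum : ∑ x, (f - P *ᵥ f) x = 0 := by
    rw [← one_dotProduct, dotProduct_sub, dotProduct_mulVec, hP, sub_self]
  have htarget : (f - P *ᵥ f) y = 1 - Fintype.card ι := by
    rw [← add_sum_erase _ _ (mem_univ y), sum_congr rfl fun x hx => hoff x (ne_of_mem_erase hx),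
      sum_const, card_erase_of_mem (mem_univ y), card_univ, nsmul_one,
      Nat.cast_pred (Fintype.card_pos_iff.mpr ⟨y⟩)] at hsum
    linear_combination hsum
  ext x
  rcases eq_or_ne x y with rfl | hx
  · simp [htarget]
  · simp [hoff x hx, hx]

lemma sub_mulVec_dotProduct_comm {P : Matrix ι ι R} (hP : P.IsSymm) (f g : ι → R) :
    (f - P *ᵥ f) ⬝ᵥ g = (g - P *ᵥ g) ⬝ᵥ f := by
  rw [sub_dotProduct, sub_dotProduct, dotProduct_comm f, dotProduct_comm (P *ᵥ f),
    dotProduct_mulVec, ← mulVec_transpose, hP.eq]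

lemma sum_sub_card_mul_comm_of_hitting {P : Matrix ι ι R} (hP : P.IsSymm) (hP1 : P *ᵥ 1 = 1)
    {h : ι → ι → R} (hh : ∀ y, ∀ x ≠ y, h y x = 1 + (P *ᵥ h y) x) (x y : ι) :
    ∑ z, h x z - Fintype.card ι * h x y = ∑ z, h y z - Fintype.card ι * h y x := by
  classical
  have hcol : 1 ᵥ* P = 1 := by rw [← mulVec_transpose, hP.eq, hP1]
  have := sub_mulVec_dotProduct_comm hP (h y) (h x)
  rw [sub_mulVec_eq_of_hitting hcol (hh y), sub_mulVec_eq_of_hitting hcol (hh x)] at this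
  simpa [sub_dotProduct, one_dotProduct, smul_dotProduct, single_dotProduct] using this

theorem Matrix.IsSymm.exists_hidden_vertex [Nonempty ι] {P : Matrix ι ι ℝ} (hP : P.IsSymm)
    (hP1 : P *ᵥ 1 = 1) {h : ι → ι → ℝ} (hh : ∀ y, ∀ x ≠ y, h y x = 1 + (P *ᵥ h y) x) :
    ∃ t, ∀ v, h v t ≤ h t v := by
  obtain ⟨t, ht⟩ := Finite.exists_max fun v : ι => ∑ z, h v z
  have hcard : (0 : ℝ) < Fintype.card ι := Nat.cast_pos.mpr Fintype.card_pos
  refine ⟨t, fun v => le_of_mul_le_mul_left ?_ hcard⟩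
  linarith [sum_sub_card_mul_comm_of_hitting hP hP1 hh t v, ht v]

end HittingTime

section BiasedRandomWalk

variable {N : ℕ} (G : SimpleGraph (Fin N)) [DecidableRel G.Adj]

lemma isSymm_PB_s7 : Matrix.IsSymm (PB G) := by
  refine IsSymm.ext fun i j => ?_
  unfold PB
  rcases eq_or_ne i j with rfl | hij
  · rfl
  · simp only [if_neg hij, if_neg hij.symm, G.adj_comm i j, add_comm]

lemma PB_mulVec_one (hdeg : ∀ v, 0 < G.degree v) : PB G *ᵥ 1 = 1 := by
  ext i
  have hsplit (j : Fin N) : PB G i j = (if i = j then PB G i i else 0) +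
      if G.Adj i j then 1 / (N : ℝ) * (1 / G.degree i + 1 / G.degree j) else 0 := by
    unfold PB
    split_ifs <;> simp_all
  have hdi : (G.degree i : ℝ) ≠ 0 := by exact_mod_cast (hdeg i).ne'
  calc (PB G *ᵥ 1) i = ∑ j, PB G i j := by simp [mulVec, dotProduct]
    _ = PB G i i + ∑ j ∈ G.neighborFinset i, 1 / (N : ℝ) * (1 / G.degree i + 1 / G.degree j) := by
      rw [sum_congr rfl fun j _ => hsplit j, sum_add_distrib, sum_ite_eq, if_pos (mem_univ i),
        ← sum_filter, ← G.neighborFinset_eq_filter]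
    _ = 1 := by
      simp only [PB, if_pos, mul_add, sum_add_distrib, sum_const, G.card_neighborFinset_eq_degree,
        nsmul_eq_mul]
      field_simp
      ring

end BiasedRandomWalk

/-- Existence of a hidden vertex: for a connected simple graph on `N ≥ 2`
vertices and a family `h` of hitting-time solutions of the biased random walk
(`h v u = H(u, v)`), there exists a vertex `t` with `H(t, v) ≤ H(v, t)` for all `v`,
i.e. `h v t ≤ h t v` for every vertex `v`. -/
theorem exists_hidden_vertex {N : ℕ} (hN : 2 ≤ N)
    (G : SimpleGraph (Fin N)) [DecidableRel G.Adj] (hconn : G.Connected)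
    (h : Fin N → Fin N → ℝ)
    (hrec : ∀ v x, x ≠ v → h v x = 1 + ∑ z, PB G x z * h v z) :
    ∃ t, ∀ v, h v t ≤ h t v := by
  have : Nontrivial (Fin N) := Fin.nontrivial_iff_two_le.mpr hN
  exact (isSymm_PB_s7 G).exists_hidden_vertex
    (PB_mulVec_one G fun v => hconn.preconnected.degree_pos_of_nontrivial v) hrec
end

section
/- (Claim 1 in the proof of Lemma 4) Let G be a connected simple graph on N ≥ 2 vertices with biased random walk matrix P^B. Any meeting-time solution m' for the modified paired process X' satisfies m'(x,y) < 2 · max_{u,v} h_v(u) for all vertices x, y, where (h_v) is a family of hitting-time solutions; that is, the meeting time of X' is less than twice the maximal hitting time of the biased random walk. -/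
open Finset Matrix

section Stochastic

variable {ι : Type*} [Fintype ι] {P : Matrix ι ι ℝ}

lemma dotProduct_mulVec_comm_of_isSymm (hP : P.IsSymm) (f g : ι → ℝ) :
    f ⬝ᵥ (P *ᵥ g) = (P *ᵥ f) ⬝ᵥ g := by
  rw [dotProduct_mulVec, ← vecMul_transpose, hP.eq]

variable [DecidableEq ι]

lemma mulVec_add_const_apply (hP : P ∈ rowStochastic ℝ ι) (f : ι → ℝ) (c : ℝ) (x : ι) :
    (P *ᵥ fun z => f z + c) x = (P *ᵥ f) x + c := by
  simp only [mulVec, dotProduct, mul_add, sum_add_distrib, ← sum_mul,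
    sum_row_of_mem_rowStochastic hP, one_mul]

lemma mulVec_apply_le_of_forall_le (hP : P ∈ rowStochastic ℝ ι) {f : ι → ℝ} {x : ι}
    (hf : ∀ z, f z ≤ f x) : (P *ᵥ f) x ≤ f x :=
  calc (P *ᵥ f) x ≤ (P *ᵥ fun _ => f x) x :=
        sum_le_sum fun z _ => mul_le_mul_of_nonneg_left (hf z) (nonneg_of_mem_rowStochastic hP)
    _ = f x := by
        simp only [mulVec, dotProduct, ← sum_mul, sum_row_of_mem_rowStochastic hP, one_mul]

lemma le_mulVec_apply_of_forall_ge (hP : P ∈ rowStochastic ℝ ι) {f : ι → ℝ} {x : ι}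
    (hf : ∀ z, f x ≤ f z) : f x ≤ (P *ᵥ f) x := by
  have := mulVec_apply_le_of_forall_le hP (f := -f) (x := x) fun z => neg_le_neg (hf z)
  rwa [mulVec_neg, Pi.neg_apply, Pi.neg_apply, neg_le_neg_iff] at this

end Stochastic

structure IsHittingTimeFamily {ι : Type*} [Fintype ι] (P : Matrix ι ι ℝ) (h : ι → ι → ℝ) :
    Prop where
  self : ∀ v, h v v = 0
  step : ∀ v x, x ≠ v → h v x = 1 + (P *ᵥ h v) x

/-- `H(π, v)` for the uniform distribution `π`, which is stationary when `P` is doubly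
stochastic. -/
noncomputable def meanHitting {ι : Type*} [Fintype ι] (h : ι → ι → ℝ) (v : ι) : ℝ :=
  (Fintype.card ι : ℝ)⁻¹ * ∑ c, h v c

/-- `H(a, v) - H(π, v) = -N Z a v` for the fundamental matrix `Z` of `P`. -/
noncomputable def hittingGreen {ι : Type*} [Fintype ι] (h : ι → ι → ℝ) (v a : ι) : ℝ :=
  h v a - meanHitting h v

lemma sum_hittingGreen {ι : Type*} [Fintype ι] (h : ι → ι → ℝ) (v : ι) :
    ∑ a, hittingGreen h v a = 0 := by
  have hcard : (Fintype.card ι : ℝ) ≠ 0 := by exact_mod_cast (Fintype.card_pos_iff.2 ⟨v⟩).ne'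
  simp only [hittingGreen, meanHitting, sum_sub_distrib, sum_const, card_univ, nsmul_eq_mul]
  field_simp
  ring

namespace IsHittingTimeFamily

variable {ι : Type*} [Fintype ι] [DecidableEq ι] {P : Matrix ι ι ℝ} {h : ι → ι → ℝ}

lemma nonneg (hh : IsHittingTimeFamily P h) (hP : P ∈ rowStochastic ℝ ι) (v x : ι) :
    0 ≤ h v x := by
  obtain ⟨x₀, -, hmin⟩ := exists_min_image univ (h v) ⟨v, mem_univ v⟩
  have hx₀ : x₀ = v := by
    by_contra hne
    have := le_mulVec_apply_of_forall_ge hP fun z => hmin z (mem_univ z)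
    linarith [hh.step v x₀ hne]
  exact hh.self v ▸ hx₀ ▸ hmin x (mem_univ x)

lemma one_le (hh : IsHittingTimeFamily P h) (hP : P ∈ rowStochastic ℝ ι) {v x : ι}
    (hx : x ≠ v) : 1 ≤ h v x := by
  rw [hh.step v x hx]
  linarith [nonneg_mulVec_of_mem_rowStochastic hP (hh.nonneg hP v) x]

/-- At `x = v` this is Kac's formula: the expected return time to `v` is `N`. -/
lemma mulVec_apply (hh : IsHittingTimeFamily P h) (hP : P ∈ doublyStochastic ℝ ι) (v x : ι) :
    (P *ᵥ h v) x = h v x - 1 + if x = v then (Fintype.card ι : ℝ) else 0 := by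
  set g : ι → ℝ := fun x => (P *ᵥ h v) x - h v x + 1
  have hg : ∀ x, x ≠ v → g x = 0 := fun x hx => by simp only [g, hh.step v x hx]; ring
  have hsum : ∑ x, g x = Fintype.card ι := by
    simp [g, sum_add_distrib, sum_sub_distrib, sum_mulVec_of_mem_doublyStochastic hP]
  have hgv : g v = Fintype.card ι :=
    (sum_eq_single v (fun x _ hx => hg x hx) (by simp)).symm.trans hsum
  split_ifs with hx
  · subst hx; linarith
  · linarith [hg x hx]

end IsHittingTimeFamily

section Green

variable {ι : Type*} [Fintype ι] [DecidableEq ι] {P : Matrix ι ι ℝ} {h : ι → ι → ℝ}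

lemma mulVec_hittingGreen_apply (hh : IsHittingTimeFamily P h) (hP : P ∈ doublyStochastic ℝ ι)
    (v x : ι) : (P *ᵥ hittingGreen h v) x
      = hittingGreen h v x - 1 + if x = v then (Fintype.card ι : ℝ) else 0 := by
  have hPr := (mem_doublyStochastic_iff_mem_rowStochastic_and_mem_colStochastic.1 hP).1
  have := mulVec_add_const_apply hPr (h v) (-meanHitting h v) x
  simp only [← sub_eq_add_neg] at this
  rw [show hittingGreen h v = fun z => h v z - meanHitting h v from rfl, this,
    hh.mulVec_apply hP]
  ring

lemma hittingGreen_comm (hh : IsHittingTimeFamily P h) (hP : P ∈ doublyStochastic ℝ ι)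
    (hPs : P.IsSymm) (a b : ι) : hittingGreen h a b = hittingGreen h b a := by
  have hcard : (Fintype.card ι : ℝ) ≠ 0 := by exact_mod_cast (Fintype.card_pos_iff.2 ⟨a⟩).ne'
  have pairing : ∀ v (f : ι → ℝ), f ⬝ᵥ (P *ᵥ hittingGreen h v)
      = f ⬝ᵥ hittingGreen h v - ∑ c, f c + Fintype.card ι * f v := by
    intro v f
    simp only [dotProduct, mulVec_hittingGreen_apply hh hP, mul_add, mul_sub, mul_ite, mul_zero,
      mul_one, sum_add_distrib, sum_sub_distrib, sum_ite_eq', mem_univ, if_true]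
    ring
  have := dotProduct_mulVec_comm_of_isSymm hPs (hittingGreen h b) (hittingGreen h a)
  rw [pairing, dotProduct_comm (P *ᵥ _), pairing, sum_hittingGreen, sum_hittingGreen,
    dotProduct_comm (hittingGreen h a)] at this
  exact mul_left_cancel₀ hcard (by linarith)

lemma meanHitting_sub_lt (hh : IsHittingTimeFamily P h) (hP : P ∈ rowStochastic ℝ ι) {M : ℝ}
    (hM : ∀ v x, h v x ≤ M) (hM₀ : 0 < M) (w u : ι) : meanHitting h w - meanHitting h u < M := by
  rcases eq_or_ne u w with rfl | hne
  · simpa using hM₀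
  have hcard : (0 : ℝ) < Fintype.card ι := by exact_mod_cast Fintype.card_pos_iff.2 ⟨u⟩
  have hle : ∑ v, (h w v - h u v) ≤ ∑ v, (M - if v = w then M + 1 else 0) := by
    refine sum_le_sum fun v _ => ?_
    split_ifs with hv
    · subst hv; linarith [hh.self v, hh.one_le hP hne.symm]
    · linarith [hM w v, hh.nonneg hP u v]
  simp only [sum_sub_distrib, sum_ite_eq', mem_univ, if_true, sum_const, card_univ,
    nsmul_eq_mul] at hle
  rw [meanHitting, meanHitting, ← mul_sub, inv_mul_lt_iff₀ hcard]
  linarith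

end Green

section PairedProcess

variable {ι : Type*} [Fintype ι] [DecidableEq ι] {P : Matrix ι ι ℝ}

/-- Generator of the modified paired process `X'`: two copies of the walk moving independently
in continuous time. -/
def pairGenerator (P : Matrix ι ι ℝ) (m : ι → ι → ℝ) (x y : ι) : ℝ :=
  (P *ᵥ fun z => m z y) x + (P *ᵥ m x) y - 2 * m x y

lemma le_of_pairGenerator_lt (hP : P ∈ rowStochastic ℝ ι) {m Φ : ι → ι → ℝ}
    (hlt : ∀ x y, x ≠ y → pairGenerator P Φ x y < pairGenerator P m x y)
    (hdiag : ∀ x, m x x ≤ Φ x x) (x y : ι) : m x y ≤ Φ x y := by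
  obtain ⟨⟨a, b⟩, -, hmax⟩ := exists_max_image univ
    (fun p : ι × ι => m p.1 p.2 - Φ p.1 p.2) ⟨(x, y), mem_univ _⟩
  have hmax' : ∀ u v, m u v - Φ u v ≤ m a b - Φ a b := fun u v => hmax (u, v) (mem_univ _)
  suffices m a b - Φ a b ≤ 0 by linarith [hmax' x y]
  rcases eq_or_ne a b with rfl | hab
  · linarith [hdiag a]
  have hfst := mulVec_apply_le_of_forall_le hP (f := (fun z => m z b) - fun z => Φ z b)
    fun z => hmax' z b
  have hsnd := mulVec_apply_le_of_forall_le hP (f := m a - Φ a) fun z => hmax' a z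
  rw [mulVec_sub, Pi.sub_apply] at hfst hsnd
  have := hlt a b hab
  simp only [pairGenerator, Pi.sub_apply] at this hfst hsnd
  linarith

lemma pairGenerator_hittingGreen {h : ι → ι → ℝ} (hh : IsHittingTimeFamily P h)
    (hP : P ∈ doublyStochastic ℝ ι) (hPs : P.IsSymm) (K : ℝ) {a b : ι} (hab : a ≠ b) :
    pairGenerator P (fun a b => hittingGreen h b a + K) a b = -2 := by
  have hPr := (mem_doublyStochastic_iff_mem_rowStochastic_and_mem_colStochastic.1 hP).1
  have hswap : (fun z => hittingGreen h z a + K) = fun z => hittingGreen h a z + K :=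
    funext fun z => by rw [hittingGreen_comm hh hP hPs z a]
  simp only [pairGenerator]
  rw [hswap, mulVec_add_const_apply hPr, mulVec_add_const_apply hPr,
    mulVec_hittingGreen_apply hh hP, mulVec_hittingGreen_apply hh hP, if_neg hab,
    if_neg hab.symm, hittingGreen_comm hh hP hPs a b]
  ring

end PairedProcess

lemma PB_isSymm {N : ℕ} (G : SimpleGraph (Fin N)) [DecidableRel G.Adj] :
    Matrix.IsSymm (PB G) := by
  refine IsSymm.ext fun i j => ?_
  rcases eq_or_ne i j with rfl | hij
  · rfl
  simp only [PB, if_neg hij, if_neg hij.symm, G.adj_comm, add_comm]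

section BiasedWalk

variable {N : ℕ} {G : SimpleGraph (Fin N)} [DecidableRel G.Adj]

lemma sum_PB_mul (x : Fin N) (f : Fin N → ℝ) :
    ∑ z, PB G x z * f z = PB G x x * f x + ∑ i ∈ G.neighborFinset x, PB G x i * f i := by
  rw [← sum_insert (f := fun z => PB G x z * f z) (G.notMem_neighborFinset_self x)]
  refine (sum_subset (subset_univ _) fun z _ hz => ?_).symm
  rw [mem_insert, not_or, SimpleGraph.mem_neighborFinset] at hz
  simp [PB, Ne.symm hz.1, hz.2]

lemma sum_PB_row (hdeg : ∀ v, 0 < G.degree v) (x : Fin N) : ∑ z, PB G x z = 1 := by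
  have hN : (N : ℝ) ≠ 0 := by exact_mod_cast (Fin.pos x).ne'
  have hx : (G.degree x : ℝ) ≠ 0 := by exact_mod_cast (hdeg x).ne'
  have hedge : ∀ i ∈ G.neighborFinset x,
      PB G x i = 1 / ((N : ℝ) * G.degree x) + 1 / ((N : ℝ) * G.degree i) := by
    intro i hi
    rw [SimpleGraph.mem_neighborFinset] at hi
    simp only [PB, if_neg (G.ne_of_adj hi), if_pos hi]
    ring
  have := sum_PB_mul (G := G) x fun _ => 1
  simp only [mul_one] at this
  rw [this, sum_congr rfl hedge, sum_add_distrib, sum_const, G.card_neighborFinset_eq_degree,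
    nsmul_eq_mul]
  simp only [PB, if_true]
  field_simp
  ring

lemma PB_nonneg_s9 (hdeg : ∀ v, 0 < G.degree v) (x z : Fin N) : 0 ≤ PB G x z := by
  have hN : (0 : ℝ) < N := by exact_mod_cast Fin.pos x
  rcases eq_or_ne x z with rfl | hxz
  · have hdx : (G.degree x : ℝ) + 1 ≤ N := by
      exact_mod_cast (G.degree_lt_card_verts x).trans_eq (Fintype.card_fin N)
    have hsum : ∑ k ∈ G.neighborFinset x, 1 / ((N : ℝ) * G.degree k) ≤ G.degree x / N :=
      calc ∑ k ∈ G.neighborFinset x, 1 / ((N : ℝ) * G.degree k)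
          ≤ ∑ _k ∈ G.neighborFinset x, 1 / (N : ℝ) := sum_le_sum fun k _ =>
            one_div_le_one_div_of_le hN (le_mul_of_one_le_right hN.le (by exact_mod_cast hdeg k))
        _ = G.degree x / N := by
            rw [sum_const, G.card_neighborFinset_eq_degree, nsmul_eq_mul, mul_one_div]
    have : (G.degree x : ℝ) / N ≤ 1 - 1 / N := by
      rw [div_le_iff₀ hN, sub_mul, one_div_mul_cancel hN.ne']
      linarith
    simp only [PB, if_true]
    linarith
  · simp only [PB, if_neg hxz]
    split_ifs
    · positivity
    · exact le_rfl

lemma PB_mem_doublyStochastic (hdeg : ∀ v, 0 < G.degree v) :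
    (PB G : Matrix (Fin N) (Fin N) ℝ) ∈ doublyStochastic ℝ (Fin N) := by
  refine mem_doublyStochastic_iff_sum.2 ⟨PB_nonneg_s9 hdeg, sum_PB_row hdeg, fun j => ?_⟩
  rw [← sum_PB_row hdeg j]
  exact sum_congr rfl fun i _ => (PB_isSymm G).apply j i

lemma sum_neighborFinset_PB_mul_sub (hdeg : ∀ v, 0 < G.degree v) (f : Fin N → ℝ) (x : Fin N) :
    ∑ i ∈ G.neighborFinset x, PB G x i * (f i - f x) = (PB G *ᵥ f) x - f x := by
  have := sum_PB_mul (G := G) x fun z => f z - f x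
  simp only [sub_self, mul_zero, zero_add] at this
  rw [← this]
  simp only [mulVec, dotProduct, mul_sub, sum_sub_distrib, ← sum_mul, sum_PB_row hdeg, one_mul]

lemma pairGenerator_PB_of_meeting (hdeg : ∀ v, 0 < G.degree v) {m : Fin N → Fin N → ℝ}
    {x y : Fin N}
    (hm : ((∑ i ∈ G.neighborFinset x, PB G x i) + (∑ j ∈ G.neighborFinset y, PB G y j)) * m x y
      = 1 + (∑ i ∈ G.neighborFinset x, PB G x i * m i y)
        + (∑ j ∈ G.neighborFinset y, PB G y j * m x j)) :
    pairGenerator (PB G) m x y = -1 := by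
  have hx := sum_neighborFinset_PB_mul_sub hdeg (fun z => m z y) x
  have hy := sum_neighborFinset_PB_mul_sub hdeg (m x) y
  simp only [mul_sub, sum_sub_distrib, ← sum_mul] at hx hy
  unfold pairGenerator
  linarith

end BiasedWalk

theorem meeting_time_modified_lt_two_hitting_general {N : ℕ} (hN : 2 ≤ N)
    (G : SimpleGraph (Fin N)) [DecidableRel G.Adj] (hconn : G.Connected)
    (h : Fin N → Fin N → ℝ) (h0 : ∀ v, h v v = 0)
    (hrec : ∀ v x, x ≠ v → h v x = 1 + ∑ z, PB G x z * h v z)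
    (m' : Fin N → Fin N → ℝ)
    (hdiag : ∀ x, m' x x = 0)
    (hm : ∀ x y, x ≠ y →
      ((∑ i ∈ G.neighborFinset x, PB G x i) + (∑ j ∈ G.neighborFinset y, PB G y j))
          * m' x y
        = 1 + (∑ i ∈ G.neighborFinset x, PB G x i * m' i y)
            + (∑ j ∈ G.neighborFinset y, PB G y j * m' x j)) :
    ∀ x y, m' x y <
      2 * Finset.univ.sup' ⟨(x, y), Finset.mem_univ _⟩
        (fun p : Fin N × Fin N => h p.2 p.1) := by
  intro x y
  have : Nontrivial (Fin N) := Fin.nontrivial_iff_two_le.2 hN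
  have hdeg : ∀ v, 0 < G.degree v := fun v => hconn.preconnected.degree_pos_of_nontrivial v
  have hP := PB_mem_doublyStochastic hdeg
  have hPr := (mem_doublyStochastic_iff_mem_rowStochastic_and_mem_colStochastic.1 hP).1
  have hh : IsHittingTimeFamily (PB G) h := ⟨h0, hrec⟩
  set M := univ.sup' ⟨(x, y), mem_univ _⟩ fun p : Fin N × Fin N => h p.2 p.1
  have hM : ∀ v u, h v u ≤ M := fun v u => le_sup' (fun p : Fin N × Fin N => h p.2 p.1)
    (mem_univ (u, v))
  obtain ⟨u, v, huv⟩ := exists_pair_ne (Fin N)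
  have hM₀ : 0 < M := zero_lt_one.trans_le ((hh.one_le hPr huv).trans (hM v u))
  obtain ⟨w, -, hw⟩ := exists_max_image univ (meanHitting h) ⟨x, mem_univ x⟩
  have hcompare : m' x y ≤ hittingGreen h y x + meanHitting h w := by
    refine le_of_pairGenerator_lt hPr (Φ := fun a b => hittingGreen h b a + meanHitting h w)
      (fun a b hab => ?_) (fun a => ?_) x y
    · rw [pairGenerator_hittingGreen hh hP (PB_isSymm G) _ hab,
        pairGenerator_PB_of_meeting hdeg (hm a b hab)]
      norm_num
    · simp only [hdiag, hittingGreen, hh.self, zero_sub]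
      linarith [hw a (mem_univ a)]
  calc m' x y ≤ h y x + (meanHitting h w - meanHitting h y) := by
        rw [hittingGreen] at hcompare; linarith
    _ < M + M := add_lt_add_of_le_of_lt (hM y x) (meanHitting_sub_lt hh hPr hM hM₀ w y)
    _ = 2 * M := (two_mul M).symm

/-- Claim 1 in the proof of Lemma 4: for a connected simple graph on
`N ≥ 2` vertices, any meeting-time solution `m'` for the modified paired process `X'`
satisfies `m' x y < 2 · max_{u,v} H(u,v)`, where `h` is a family of hitting-time
solutions of the biased random walk (`h v u = H(u, v)`). -/
theorem meeting_time_modified_lt_two_hitting {N : ℕ} (hN : 2 ≤ N)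
    (G : SimpleGraph (Fin N)) [DecidableRel G.Adj] (hconn : G.Connected)
    (h : Fin N → Fin N → ℝ) (h0 : ∀ v, h v v = 0)
    (hrec : ∀ v x, x ≠ v → h v x = 1 + ∑ z, PB G x z * h v z)
    (m' : Fin N → Fin N → ℝ)
    (hsym : ∀ x y, m' x y = m' y x) (hdiag : ∀ x, m' x x = 0)
    (hm : ∀ x y, x ≠ y →
      ((∑ i ∈ G.neighborFinset x, PB G x i) + (∑ j ∈ G.neighborFinset y, PB G y j))
          * m' x y
        = 1 + (∑ i ∈ G.neighborFinset x, PB G x i * m' i y)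
            + (∑ j ∈ G.neighborFinset y, PB G y j * m' x j)) :
    ∀ x y, m' x y <
      2 * Finset.univ.sup' ⟨(x, y), Finset.mem_univ _⟩
        (fun p : Fin N × Fin N => h p.2 p.1) :=
  meeting_time_modified_lt_two_hitting_general hN G hconn h h0 hrec m' hdiag hm
end

section
/- (Lemma 6) Suppose the quantized consensus update is applied to an edge {i,j} at which a non-trivial meeting occurs, i.e., Q_i ≤ Q_j − 2, producing Q' with Q'_i = Q_i + 1, Q'_j = Q_j − 1, and Q'_k = Q_k for k ∉ {i,j}. Then the Lyapunov function decreases by at least 2: L(Q) ≥ L(Q') + 2. -/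
/-! Moving one unit from `Q j` to `Q i` keeps the sum, hence the mean `m`, fixed, and changes
only two terms of `L`: `(Q i - m)² + (Q j - m)²` drops by `2 (Q j - Q i - 1)`, which is at
least `2` for a non-trivial meeting. -/

open Finset

section Transfer

variable {ι : Type*} [Fintype ι] {i j : ι}

theorem sum_sub_sum_eq_of_eq_of_ne_of_ne {M : Type*} [AddCommGroup M] {f g : ι → M}
    (hij : i ≠ j) (h : ∀ k, k ≠ i → k ≠ j → f k = g k) :
    ∑ k, f k - ∑ k, g k = (f i - g i) + (f j - g j) := by
  rw [← sum_sub_distrib, sum_eq_add i j hij (fun k _ hk => sub_eq_zero.2 (h k hk.1 hk.2))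
    (fun hi => absurd (mem_univ i) hi) (fun hj => absurd (mem_univ j) hj)]

variable {R : Type*} [CommRing R] {x x' : ι → R} {d : R}

theorem sum_eq_sum_of_transfer (hij : i ≠ j) (hi : x' i = x i + d) (hj : x' j = x j - d)
    (hrest : ∀ k, k ≠ i → k ≠ j → x' k = x k) :
    ∑ k, x' k = ∑ k, x k := by
  rw [← sub_eq_zero, sum_sub_sum_eq_of_eq_of_ne_of_ne hij hrest, hi, hj]
  ring

theorem sum_sq_sub_sub_sum_sq_sub_of_transfer (m : R) (hij : i ≠ j) (hi : x' i = x i + d)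
    (hj : x' j = x j - d) (hrest : ∀ k, k ≠ i → k ≠ j → x' k = x k) :
    ∑ k, (x k - m) ^ 2 - ∑ k, (x' k - m) ^ 2 = 2 * d * (x j - x i - d) := by
  rw [sum_sub_sum_eq_of_eq_of_ne_of_ne hij fun k hki hkj => by rw [hrest k hki hkj], hi, hj]
  ring

end Transfer

theorem lyapunov_decreases_by_two_general {N : ℕ}
    (Q Q' : Fin N → ℤ) (i j : Fin N) (hij : i ≠ j)
    (hnt : Q i ≤ Q j - 2)
    (hQi : Q' i = Q i + 1) (hQj : Q' j = Q j - 1)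
    (hrest : ∀ k, k ≠ i → k ≠ j → Q' k = Q k) :
    ∑ k, ((Q k : ℝ) - (∑ l, (Q l : ℝ)) / N) ^ 2
      ≥ (∑ k, ((Q' k : ℝ) - (∑ l, (Q' l : ℝ)) / N) ^ 2) + 2 := by
  have hi : (Q' i : ℝ) = Q i + 1 := by exact_mod_cast hQi
  have hj : (Q' j : ℝ) = Q j - 1 := by exact_mod_cast hQj
  have hrest' : ∀ k, k ≠ i → k ≠ j → (Q' k : ℝ) = Q k := fun k hki hkj => by
    rw [hrest k hki hkj]
  have hnt' : (Q i : ℝ) ≤ Q j - 2 := by exact_mod_cast hnt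
  rw [sum_eq_sum_of_transfer hij hi hj hrest']
  have hdrop := sum_sq_sub_sub_sum_sq_sub_of_transfer ((∑ l, (Q l : ℝ)) / N) hij hi hj hrest'
  linarith

/-- Lemma 6: if the quantized consensus update is applied to an edge
`{i,j}` at which a non-trivial meeting occurs (`Q i ≤ Q j − 2`), producing `Q'` with
`Q' i = Q i + 1`, `Q' j = Q j − 1` and all other coordinates unchanged, then the
Lyapunov function `L(Q) = ∑ k (Q k − Q̄)²` (with `Q̄ = (∑ k Q k)/N`) decreases by at
least 2: `L(Q) ≥ L(Q') + 2`. -/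
theorem lyapunov_decreases_by_two {N : ℕ} (hN : 1 ≤ N)
    (Q Q' : Fin N → ℤ) (i j : Fin N) (hij : i ≠ j)
    (hnt : Q i ≤ Q j - 2)
    (hQi : Q' i = Q i + 1) (hQj : Q' j = Q j - 1)
    (hrest : ∀ k, k ≠ i → k ≠ j → Q' k = Q k) :
    ∑ k, ((Q k : ℝ) - (∑ l, (Q l : ℝ)) / N) ^ 2
      ≥ (∑ k, ((Q' k : ℝ) - (∑ l, (Q' l : ℝ)) / N) ^ 2) + 2 :=
  lyapunov_decreases_by_two_general Q Q' i j hij hnt hQi hQj hrest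
end

section
/- (Non-trivial meeting count bound, from the proof of Theorem 1) Consider any finite execution Q(0), Q(1), …, Q(T) of the quantized consensus algorithm on a simple graph G on N vertices, where each Q(t+1) is obtained from Q(t) by applying the quantized consensus update to some edge of G. Let m = min_i Q_i(0) and M = max_i Q_i(0). Then the number of steps t at which a non-trivial meeting occurs (i.e., the chosen edge {i,j} satisfies |Q_i(t) − Q_j(t)| ≥ 2) is at most (M − m)² N / 8. -/
/-!
A non-trivial meeting moves two values at distance at least 2 one step towards each other,
which lowers the sum of squared deviations from any fixed centre by at least 2, while a trivial
meeting only permutes the values and leaves that sum unchanged. Centred at the midpoint of the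
initial range `[m, M]`, the sum starts at most at `N (M - m)² / 4` and never becomes negative,
so there are at most `N (M - m)² / 8` non-trivial meetings.
-/

/-- The quantized consensus update on the edge `{i,j}`: if `|Q i − Q j| ≥ 2`
(a non-trivial meeting), the smaller value increases by 1 and the larger decreases
by 1; if `|Q i − Q j| ≤ 1` (a trivial meeting), the two values are swapped; all
other coordinates are unchanged. -/
def qcUpdate {N : ℕ} (Q Q' : Fin N → ℤ) (i j : Fin N) : Prop :=
  (∀ k, k ≠ i → k ≠ j → Q' k = Q k) ∧
  ((2 ≤ |Q i - Q j| ∧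
      ((Q i ≤ Q j ∧ Q' i = Q i + 1 ∧ Q' j = Q j - 1) ∨
       (Q j ≤ Q i ∧ Q' j = Q j + 1 ∧ Q' i = Q i - 1))) ∨
   (|Q i - Q j| ≤ 1 ∧ Q' i = Q j ∧ Q' j = Q i))

open Finset

theorem mul_card_filter_range_le_sub {f : ℕ → ℤ} {P : ℕ → Prop} [DecidablePred P] {T : ℕ}
    {d : ℤ} (hle : ∀ t < T, f (t + 1) ≤ f t) (hdrop : ∀ t < T, P t → f (t + 1) + d ≤ f t) :
    d * #{t ∈ range T | P t} ≤ f 0 - f T := by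
  induction T with
  | zero => simp
  | succ n ih =>
    have ih := ih (fun t ht => hle t (by omega)) (fun t ht => hdrop t (by omega))
    rw [range_add_one, filter_insert]
    by_cases hn : P n
    · rw [if_pos hn, card_insert_of_notMem (by simp)]
      have := hdrop n n.lt_add_one hn
      push_cast
      linarith
    · rw [if_neg hn]
      linarith [hle n n.lt_add_one]

section SqDeviation

variable {ι : Type*} [Fintype ι]

/-- Four times the sum of squared deviations of `Q` from `c / 2`, kept integral by doubling. -/
def sqDeviation (c : ℤ) (Q : ι → ℤ) : ℤ := ∑ k, (2 * Q k - c) ^ 2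

theorem sqDeviation_nonneg (c : ℤ) (Q : ι → ℤ) : 0 ≤ sqDeviation c Q :=
  sum_nonneg fun _ _ => sq_nonneg _

theorem sqDeviation_comp_perm (c : ℤ) (Q : ι → ℤ) (σ : Equiv.Perm ι) :
    sqDeviation c (Q ∘ σ) = sqDeviation c Q :=
  Equiv.sum_comp σ fun k => (2 * Q k - c) ^ 2

theorem sqDeviation_le_of_mem_Icc {Q : ι → ℤ} {m M : ℤ} (hQ : ∀ k, Q k ∈ Set.Icc m M) :
    sqDeviation (m + M) Q ≤ Fintype.card ι * (M - m) ^ 2 := by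
  calc sqDeviation (m + M) Q ≤ ∑ _k : ι, (M - m) ^ 2 := by
        refine sum_le_sum fun k _ => ?_
        obtain ⟨hm, hM⟩ := hQ k
        exact sq_le_sq' (by linarith) (by linarith)
    _ = Fintype.card ι * (M - m) ^ 2 := by simp

theorem sqDeviation_sub_of_eqOn_compl_pair {c : ℤ} {Q Q' : ι → ℤ} {i j : ι} (hij : i ≠ j)
    (h : ∀ k, k ≠ i → k ≠ j → Q' k = Q k) :
    sqDeviation c Q' - sqDeviation c Q =
      ((2 * Q' i - c) ^ 2 - (2 * Q i - c) ^ 2) + ((2 * Q' j - c) ^ 2 - (2 * Q j - c) ^ 2) := by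
  rw [sqDeviation, sqDeviation, ← sum_sub_distrib]
  exact Fintype.sum_eq_add i j hij fun k ⟨hki, hkj⟩ => by rw [h k hki hkj, sub_self]

end SqDeviation

namespace qcUpdate

variable {N : ℕ} {Q Q' : Fin N → ℤ} {i j : Fin N}

theorem eq_comp_swap_of_abs_sub_le_one (hQ : qcUpdate Q Q' i j) (h : |Q i - Q j| ≤ 1) :
    Q' = Q ∘ Equiv.swap i j := by
  obtain ⟨hoff, ⟨h2, -⟩ | ⟨-, hi, hj⟩⟩ := hQ
  · exact absurd (h2.trans h) (by norm_num)
  funext k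
  rw [Function.comp_apply, Equiv.swap_apply_def]
  split_ifs with hki hkj
  · rwa [hki]
  · rwa [hkj]
  · exact hoff k hki hkj

theorem sqDeviation_add_eight_le (hQ : qcUpdate Q Q' i j) (h : 2 ≤ |Q i - Q j|) (c : ℤ) :
    sqDeviation c Q' + 8 ≤ sqDeviation c Q := by
  have hij : i ≠ j := by
    rintro rfl
    simp at h
  obtain ⟨hoff, ⟨-, hcase⟩ | ⟨h1, -⟩⟩ := hQ
  · have hdiff := sqDeviation_sub_of_eqOn_compl_pair (c := c) hij hoff
    rcases hcase with ⟨hle, hi, hj⟩ | ⟨hle, hj, hi⟩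
    · rw [abs_of_nonpos (by linarith)] at h
      rw [hi, hj] at hdiff
      nlinarith
    · rw [abs_of_nonneg (by linarith)] at h
      rw [hi, hj] at hdiff
      nlinarith
  · exact absurd (h.trans h1) (by norm_num)

theorem sqDeviation_le (hQ : qcUpdate Q Q' i j) (c : ℤ) : sqDeviation c Q' ≤ sqDeviation c Q := by
  rcases le_or_gt 2 |Q i - Q j| with h | h
  · linarith [hQ.sqDeviation_add_eight_le h c]
  · rw [hQ.eq_comp_swap_of_abs_sub_le_one (by omega), sqDeviation_comp_perm]

end qcUpdate

theorem nontrivial_meeting_count_le_general {N : ℕ} (hN : 1 ≤ N)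
    (T : ℕ) (Q : ℕ → Fin N → ℤ) (e : ℕ → Fin N × Fin N)
    (hupd : ∀ t < T, qcUpdate (Q t) (Q (t + 1)) (e t).1 (e t).2) :
    ((((Finset.range T).filter
        (fun t => 2 ≤ |Q t (e t).1 - Q t (e t).2|)).card : ℝ))
      ≤ ((Finset.univ.sup' ⟨⟨0, hN⟩, Finset.mem_univ _⟩ (Q 0)
            - Finset.univ.inf' ⟨⟨0, hN⟩, Finset.mem_univ _⟩ (Q 0) : ℤ) : ℝ) ^ 2
          * N / 8 := by
  set M := univ.sup' ⟨⟨0, hN⟩, mem_univ _⟩ (Q 0)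
  set m := univ.inf' ⟨⟨0, hN⟩, mem_univ _⟩ (Q 0)
  have hcount := mul_card_filter_range_le_sub (f := fun t => sqDeviation (m + M) (Q t)) (d := 8)
    (fun t ht => (hupd t ht).sqDeviation_le _)
    (fun t ht h => (hupd t ht).sqDeviation_add_eight_le h _)
  have hinit : sqDeviation (m + M) (Q 0) ≤ N * (M - m) ^ 2 := by
    simpa using sqDeviation_le_of_mem_Icc fun k =>
      ⟨inf'_le (Q 0) (mem_univ k), le_sup' (Q 0) (mem_univ k)⟩
  have hfinal := sqDeviation_nonneg (m + M) (Q T)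
  have key : (#{t ∈ range T | 2 ≤ |Q t (e t).1 - Q t (e t).2|} : ℤ) * 8 ≤ (M - m) ^ 2 * N := by
    linarith
  rw [le_div_iff₀ (by norm_num)]
  exact_mod_cast key

/-- Non-trivial meeting count bound: for any finite execution
`Q 0, Q 1, …, Q T` of the quantized consensus algorithm on a simple graph `G` on `N`
vertices, where at each step `t < T` the update is applied to the edge `e t` of `G`,
the number of steps at which a non-trivial meeting occurs (`|Q t i − Q t j| ≥ 2` for
the chosen edge `{i,j} = e t`) is at most `(M − m)² N / 8`, where `m = min_i Q 0 i`
and `M = max_i Q 0 i`. -/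
theorem nontrivial_meeting_count_le {N : ℕ} (hN : 1 ≤ N)
    (G : SimpleGraph (Fin N)) (T : ℕ) (Q : ℕ → Fin N → ℤ) (e : ℕ → Fin N × Fin N)
    (hadj : ∀ t < T, G.Adj (e t).1 (e t).2)
    (hupd : ∀ t < T, qcUpdate (Q t) (Q (t + 1)) (e t).1 (e t).2) :
    ((((Finset.range T).filter
        (fun t => 2 ≤ |Q t (e t).1 - Q t (e t).2|)).card : ℝ))
      ≤ ((Finset.univ.sup' ⟨⟨0, hN⟩, Finset.mem_univ _⟩ (Q 0)
            - Finset.univ.inf' ⟨⟨0, hN⟩, Finset.mem_univ _⟩ (Q 0) : ℤ) : ℝ) ^ 2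
          * N / 8 :=
  nontrivial_meeting_count_le_general hN T Q e hupd
end

section
/- (Meeting time on the complete graph) Let G be the complete graph on N ≥ 2 vertices, with biased random walk matrix P^B (so P^B_{xy} = 2/(N(N−1)) for every pair of distinct vertices x, y). Then the function m defined by m(x,y) = N(N−1)/2 for x ≠ y and m(x,x) = 0 is a meeting-time solution for the paired process X; hence the meeting time of the paired process on the complete graph equals N(N−1)/2. -/
open Finset

namespace SimpleGraph

variable {V : Type*} [Fintype V] [DecidableEq V] {G : SimpleGraph V} [DecidableRel G.Adj]

theorem neighborFinset_eq_univ_erase_of_adj_iff_ne (hG : ∀ x y, G.Adj x y ↔ x ≠ y) (x : V) :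
    G.neighborFinset x = univ.erase x := by
  ext i
  simp [hG, ne_comm]

theorem degree_eq_card_sub_one_of_adj_iff_ne (hG : ∀ x y, G.Adj x y ↔ x ≠ y) (x : V) :
    G.degree x = Fintype.card V - 1 := by
  rw [← card_neighborFinset_eq_degree, neighborFinset_eq_univ_erase_of_adj_iff_ne hG,
    card_erase_of_mem (mem_univ x), card_univ]

end SimpleGraph

open SimpleGraph

section CompleteGraph

variable {N : ℕ} {G : SimpleGraph (Fin N)} [DecidableRel G.Adj]

theorem cast_sub_one_ne_zero_of_two_le (hN : 2 ≤ N) : (N : ℝ) - 1 ≠ 0 := by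
  rw [sub_ne_zero]
  exact_mod_cast (by omega : N ≠ 1)

theorem cast_degree_of_adj_iff_ne (hG : ∀ x y, G.Adj x y ↔ x ≠ y) (x : Fin N) :
    (G.degree x : ℝ) = N - 1 := by
  rw [degree_eq_card_sub_one_of_adj_iff_ne hG, Fintype.card_fin, Nat.cast_sub (Fin.pos x),
    Nat.cast_one]

theorem PB_of_ne (hG : ∀ x y, G.Adj x y ↔ x ≠ y) {x y : Fin N} (hxy : x ≠ y) :
    PB G x y = 2 / (N * (N - 1)) := by
  rw [PB, if_neg hxy, if_pos ((hG x y).2 hxy), cast_degree_of_adj_iff_ne hG,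
    cast_degree_of_adj_iff_ne hG]
  simp only [div_eq_mul_inv, mul_inv]
  ring

theorem sum_neighborFinset_PB (hN : 2 ≤ N) (hG : ∀ x y, G.Adj x y ↔ x ≠ y) (x : Fin N) :
    ∑ i ∈ G.neighborFinset x, PB G x i = 2 / N := by
  have hN1 := cast_sub_one_ne_zero_of_two_le hN
  rw [sum_congr rfl fun i hi => PB_of_ne hG (G.ne_of_adj ((mem_neighborFinset G x i).1 hi)),
    sum_const, nsmul_eq_mul, card_neighborFinset_eq_degree, cast_degree_of_adj_iff_ne hG]
  field_simp

variable {m : Fin N → Fin N → ℝ}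

theorem meetingTime_symm (hm : ∀ x y, m x y = if x = y then 0 else (N : ℝ) * ((N : ℝ) - 1) / 2)
    (x y : Fin N) : m x y = m y x := by
  rw [hm, hm]
  by_cases h : x = y <;> simp [h, eq_comm]

theorem PB_mul_meetingTime (hN : 2 ≤ N) (hG : ∀ x y, G.Adj x y ↔ x ≠ y)
    (hm : ∀ x y, m x y = if x = y then 0 else (N : ℝ) * ((N : ℝ) - 1) / 2)
    {x i y : Fin N} (hxi : x ≠ i) (hiy : i ≠ y) : PB G x i * m i y = 1 := by
  have hN1 := cast_sub_one_ne_zero_of_two_le hN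
  have hN0 : (N : ℝ) ≠ 0 := by exact_mod_cast (by omega : N ≠ 0)
  rw [PB_of_ne hG hxi, hm, if_neg hiy]
  field_simp

theorem sum_erase_PB_mul_meetingTime (hN : 2 ≤ N) (hG : ∀ x y, G.Adj x y ↔ x ≠ y)
    (hm : ∀ x y, m x y = if x = y then 0 else (N : ℝ) * ((N : ℝ) - 1) / 2)
    {x y : Fin N} (hxy : x ≠ y) :
    ∑ i ∈ (G.neighborFinset x).erase y, PB G x i * m i y = N - 2 := by
  rw [neighborFinset_eq_univ_erase_of_adj_iff_ne hG]
  have hterm : ∀ i ∈ (univ.erase x).erase y, PB G x i * m i y = 1 := by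
    intro i hi
    obtain ⟨hiy, hix, -⟩ := by simpa only [mem_erase] using hi
    exact PB_mul_meetingTime hN hG hm (Ne.symm hix) hiy
  rw [sum_congr rfl hterm, sum_const, nsmul_one,
    card_erase_of_mem (mem_erase.2 ⟨hxy.symm, mem_univ y⟩), card_erase_of_mem (mem_univ x),
    card_univ, Fintype.card_fin, Nat.sub_sub, Nat.cast_sub hN]
  norm_num

end CompleteGraph

/-- Meeting time on the complete graph: on the complete graph on
`N ≥ 2` vertices (any two distinct vertices adjacent), the biased random walk matrix
satisfies `P^B x y = 2/(N(N−1))` for all `x ≠ y`, and the function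
`m x y = N(N−1)/2` for `x ≠ y`, `m x x = 0` is a meeting-time solution for the paired
process `X`; hence the meeting time of the paired process on the complete graph
equals `N(N−1)/2`. -/
theorem complete_graph_meeting_time {N : ℕ} (hN : 2 ≤ N)
    (G : SimpleGraph (Fin N)) [DecidableRel G.Adj]
    (hG : ∀ x y, G.Adj x y ↔ x ≠ y)
    (m : Fin N → Fin N → ℝ)
    (hmdef : ∀ x y, m x y = if x = y then 0 else (N : ℝ) * ((N : ℝ) - 1) / 2) :
    (∀ x y, x ≠ y → PB G x y = 2 / ((N : ℝ) * ((N : ℝ) - 1))) ∧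
    (∀ x y, m x y = m y x) ∧ (∀ x, m x x = 0) ∧
    (∀ x y, x ≠ y →
      ((∑ i ∈ G.neighborFinset x, PB G x i) + (∑ j ∈ G.neighborFinset y, PB G y j)
          - PB G x y) * m x y
        = 1 + (∑ i ∈ (G.neighborFinset x).erase y, PB G x i * m i y)
            + (∑ j ∈ (G.neighborFinset y).erase x, PB G y j * m x j)) := by
  refine ⟨fun x y => PB_of_ne hG, meetingTime_symm hmdef, fun x => by simp [hmdef], ?_⟩
  intro x y hxy
  have hN0 : (N : ℝ) ≠ 0 := by exact_mod_cast (by omega : N ≠ 0)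
  have hN1 := cast_sub_one_ne_zero_of_two_le hN
  simp_rw [meetingTime_symm hmdef x]
  rw [sum_neighborFinset_PB hN hG, sum_neighborFinset_PB hN hG,
    sum_erase_PB_mul_meetingTime hN hG hmdef hxy,
    sum_erase_PB_mul_meetingTime hN hG hmdef hxy.symm, PB_of_ne hG hxy, hmdef, if_neg hxy.symm]
  field_simp
  ring
end
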